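/- arXiv:2006.06773 — 7 statements merged into one kernel-verified Lean document; each statement's English description precedes it below -/
import Mathlib

section
/- Assume u(a) = −(1−γ)|1−a| − γ(1−a)² for some γ ∈ [0,1] (so u'(v) = 1+γ−2γv on [0,1) and κ = 2γ), and f is logconcave and C¹ on [0,1]. Then G(v) := κF(v) − u'(v)f(v) = 2γF(v) − (1−γ+2γ(1−v))f(v) is quasiconvex on [0,1]; moreover it is strictly quasiconvex if γ > 0 or f is strictly logconcave on [0,1]. -/
private lemma key0 (γ : ℝ) (hγ0 : 0 ≤ γ) (hγ1 : γ ≤ 1) {a b φa φb : ℝ}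
    (hb1 : b ≤ 1) (hab : a ≤ b) (hφab : φb ≤ φa)
    (h : (1 - γ + 2 * γ * (1 - a)) * φa ≤ 4 * γ) :
    (1 - γ + 2 * γ * (1 - b)) * φb ≤ 4 * γ := by
  have hψb : 0 ≤ 1 - γ + 2 * γ * (1 - b) := by nlinarith [mul_nonneg hγ0 (sub_nonneg.mpr hb1)]
  have hψab : 1 - γ + 2 * γ * (1 - b) ≤ 1 - γ + 2 * γ * (1 - a) := by nlinarith
  rcases le_or_gt φb 0 with hb0 | hb0
  · nlinarith [mul_nonneg hψb (neg_nonneg.mpr hb0)]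
  · nlinarith [mul_le_mul_of_nonneg_right hψab hb0.le,
      mul_le_mul_of_nonneg_left hφab (hψb.trans hψab)]

private lemma key1 (γ : ℝ) (hγ0 : 0 ≤ γ) (hγ1 : γ ≤ 1) {a b φa φb : ℝ}
    (hb1 : b ≤ 1) (hab : a < b) (hφab : φb ≤ φa)
    (hstrict : 0 < γ ∨ φb < φa)
    (h : (1 - γ + 2 * γ * (1 - a)) * φa ≤ 4 * γ) :
    (1 - γ + 2 * γ * (1 - b)) * φb < 4 * γ := by
  have ha1 : a < 1 := lt_of_lt_of_le hab hb1
  have hψb : 0 ≤ 1 - γ + 2 * γ * (1 - b) := by nlinarith [mul_nonneg hγ0 (sub_nonneg.mpr hb1)]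
  have hψa : 0 ≤ 1 - γ + 2 * γ * (1 - a) := by nlinarith [mul_nonneg hγ0 (sub_nonneg.mpr ha1.le)]
  rcases hstrict with hγpos | hφst
  · rcases le_or_gt φb 0 with hb0 | hb0
    · nlinarith [mul_nonneg hψb (neg_nonneg.mpr hb0)]
    · have hψab : 1 - γ + 2 * γ * (1 - b) < 1 - γ + 2 * γ * (1 - a) := by nlinarith
      calc (1 - γ + 2 * γ * (1 - b)) * φb < (1 - γ + 2 * γ * (1 - a)) * φb :=
            mul_lt_mul_of_pos_right hψab hb0
        _ ≤ (1 - γ + 2 * γ * (1 - a)) * φa := mul_le_mul_of_nonneg_left hφab hψa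
        _ ≤ 4 * γ := h
  · have hψapos : 0 < 1 - γ + 2 * γ * (1 - a) := by
      rcases eq_or_lt_of_le hγ1 with rfl | hlt
      · nlinarith
      · nlinarith [mul_nonneg hγ0 (sub_nonneg.mpr ha1.le)]
    rcases le_or_gt φb 0 with hb0 | hb0
    · rcases eq_or_lt_of_le hγ0 with rfl | hγpos
      · have : φa ≤ 0 := by nlinarith
        nlinarith
      · nlinarith [mul_nonneg hψb (neg_nonneg.mpr hb0)]
    · have hψab : 1 - γ + 2 * γ * (1 - b) ≤ 1 - γ + 2 * γ * (1 - a) := by nlinarith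
      calc (1 - γ + 2 * γ * (1 - b)) * φb ≤ (1 - γ + 2 * γ * (1 - a)) * φb :=
            mul_le_mul_of_nonneg_right hψab hb0.le
        _ < (1 - γ + 2 * γ * (1 - a)) * φa := mul_lt_mul_of_pos_left hφst hψapos
        _ ≤ 4 * γ := h

/-- Under linear-quadratic Proposer utility and a logconcave type
density, `G(v) = κF(v) − u'(v)f(v) = 2γF(v) − (1−γ+2γ(1−v))f(v)` is quasiconvex
on `[0,1]`, strictly so if `γ > 0` or `f` is strictly logconcave. -/
theorem stmt_8 (γ : ℝ) (hγ : γ ∈ Set.Icc (0:ℝ) 1)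
    (F f : ℝ → ℝ)
    (hfpos : ∀ v ∈ Set.Icc (0:ℝ) 1, 0 < f v)
    (hfC1 : ∀ v ∈ Set.Icc (0:ℝ) 1, DifferentiableAt ℝ f v)
    (hfC1' : ContinuousOn (deriv f) (Set.Icc 0 1))
    (hF : ∀ v ∈ Set.Icc (0:ℝ) 1, HasDerivAt F (f v) v)
    (hlc : ConcaveOn ℝ (Set.Icc 0 1) (fun v => Real.log (f v)))
    (G : ℝ → ℝ)
    (hG : ∀ v, G v = 2 * γ * F v - (1 - γ + 2 * γ * (1 - v)) * f v) :
    QuasiconvexOn ℝ (Set.Icc 0 1) G ∧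
      ((0 < γ ∨ StrictConcaveOn ℝ (Set.Icc 0 1) (fun v => Real.log (f v))) →
        ∀ v₁ ∈ Set.Icc (0:ℝ) 1, ∀ v₂ ∈ Set.Icc (0:ℝ) 1, v₁ ≠ v₂ →
          ∀ c ∈ Set.Ioo (0:ℝ) 1,
            G (c * v₁ + (1 - c) * v₂) < max (G v₁) (G v₂)) := by
  obtain ⟨hγ0, hγ1⟩ := hγ
  have hGfun : G = fun v => 2 * γ * F v - (1 - γ + 2 * γ * (1 - v)) * f v := funext hG
  set I : Set ℝ := Set.Icc 0 1 with hI
  set h : ℝ → ℝ := fun v => 4 * γ * f v - (1 - γ + 2 * γ * (1 - v)) * deriv f v with hh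
  -- G has derivative h on I
  have hG' : ∀ v ∈ I, HasDerivAt G (h v) v := by
    intro v hv
    have h1 : HasDerivAt (fun w => 2 * γ * F w) (2 * γ * f v) v := (hF v hv).const_mul _
    have h2 : HasDerivAt (fun w => 1 - γ + 2 * γ * (1 - w)) (2 * γ * (0 - 1)) v :=
      (((hasDerivAt_const v (1:ℝ)).sub (hasDerivAt_id v)).const_mul (2*γ)).const_add (1 - γ)
    have h3 := (hfC1 v hv).hasDerivAt
    have := h1.sub (h2.mul h3)
    rw [hGfun]
    convert this using 1
    case e'_4 => rfl
    case e'_5 => rfl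
    case e'_8 => rfl
    simp only [hh]
    try ring
  have hGcont : ContinuousOn G I := fun v hv => (hG' v hv).continuousAt.continuousWithinAt
  have hGderiv : ∀ v ∈ I, deriv G v = h v := fun v hv => (hG' v hv).deriv
  -- logarithmic derivative
  set φ : ℝ → ℝ := fun v => deriv f v / f v with hφ
  have hlog : ∀ v ∈ I, HasDerivAt (fun w => Real.log (f w)) (φ v) v := fun v hv =>
    (hfC1 v hv).hasDerivAt.log (hfpos v hv).ne'
  have hφd : ∀ v ∈ I, deriv (fun w => Real.log (f w)) v = φ v := fun v hv => (hlog v hv).deriv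
  have hφanti : AntitoneOn φ I := by
    have := hlc.antitoneOn_deriv (fun x hx => (hlog x hx).differentiableAt)
    intro a ha b hb hab
    rw [← hφd a ha, ← hφd b hb]
    exact this ha hb hab
  have hfactor : ∀ v ∈ I, h v = f v * (4 * γ - (1 - γ + 2 * γ * (1 - v)) * φ v) := by
    intro v hv
    have hf0 := (hfpos v hv).ne'
    simp only [hh, hφ]
    field_simp
  -- upcrossing
  have hup : ∀ a ∈ I, ∀ b ∈ I, a ≤ b → 0 ≤ h a → 0 ≤ h b := by
    intro a ha b hb hab h0
    rw [hfactor a ha] at h0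
    rw [hfactor b hb]
    have ha' : (1 - γ + 2 * γ * (1 - a)) * φ a ≤ 4 * γ := by
      nlinarith [hfpos a ha, mul_pos (hfpos a ha) (hfpos a ha)]
    have := key0 γ hγ0 hγ1 hb.2 hab (hφanti ha hb hab) ha'
    nlinarith [hfpos b hb]
  -- the threshold
  set T : Set ℝ := insert 1 {v ∈ I | 0 ≤ h v} with hT
  have hTne : T.Nonempty := ⟨1, Set.mem_insert _ _⟩
  have hTbdd : BddBelow T := by
    refine ⟨0, ?_⟩
    rintro x (rfl | ⟨hx, _⟩)
    · norm_num
    · exact hx.1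
  set m : ℝ := sInf T with hm
  have hm0 : 0 ≤ m := by
    refine le_csInf hTne ?_
    rintro x (rfl | ⟨hx, _⟩)
    · norm_num
    · exact hx.1
  have hm1 : m ≤ 1 := csInf_le hTbdd (Set.mem_insert _ _)
  have claimA : ∀ v ∈ I, v < m → h v < 0 := by
    intro v hv hvm
    by_contra hcon
    push_neg at hcon
    exact absurd (csInf_le hTbdd (Set.mem_insert_of_mem _ ⟨hv, hcon⟩)) (not_le.mpr hvm)
  have claimB : ∀ v ∈ I, m < v → v < 1 → 0 ≤ h v := by
    intro v hv hmv hv1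
    obtain ⟨w, hw, hwv⟩ := exists_lt_of_csInf_lt hTne hmv
    rcases hw with rfl | ⟨hwI, hw0⟩
    · exact absurd hwv (not_lt.mpr hv1.le)
    · exact hup w hwI v hv hwv.le hw0
  -- monotonicity pieces
  have hIcc0m : Set.Icc (0:ℝ) m ⊆ I := Set.Icc_subset_Icc le_rfl hm1
  have hIccm1 : Set.Icc m (1:ℝ) ⊆ I := Set.Icc_subset_Icc hm0 le_rfl
  have hanti : AntitoneOn G (Set.Icc 0 m) := by
    apply antitoneOn_of_deriv_nonpos (convex_Icc _ _) (hGcont.mono hIcc0m)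
    · intro x hx
      rw [interior_Icc] at hx
      exact ((hG' x (hIcc0m (Set.mem_Icc_of_Ioo hx))).differentiableAt).differentiableWithinAt
    · intro x hx
      rw [interior_Icc] at hx
      have hxI := hIcc0m (Set.mem_Icc_of_Ioo hx)
      rw [hGderiv x hxI]
      exact (claimA x hxI hx.2).le
  have hmono : MonotoneOn G (Set.Icc m 1) := by
    apply monotoneOn_of_deriv_nonneg (convex_Icc _ _) (hGcont.mono hIccm1)
    · intro x hx
      rw [interior_Icc] at hx
      exact ((hG' x (hIccm1 (Set.mem_Icc_of_Ioo hx))).differentiableAt).differentiableWithinAt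
    · intro x hx
      rw [interior_Icc] at hx
      have hxI := hIccm1 (Set.mem_Icc_of_Ioo hx)
      rw [hGderiv x hxI]
      exact claimB x hxI hx.1 hx.2
  constructor
  · -- quasiconvexity
    intro r
    rw [convex_iff_ordConnected]
    constructor
    rintro x ⟨hxI, hxr⟩ y ⟨hyI, hyr⟩ z hz
    have hzI : z ∈ I := ⟨le_trans hxI.1 hz.1, le_trans hz.2 hyI.2⟩
    refine ⟨hzI, ?_⟩
    rcases le_total z m with hzm | hmz
    · have hx' : x ∈ Set.Icc (0:ℝ) m := ⟨hxI.1, le_trans hz.1 hzm⟩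
      exact le_trans (hanti hx' ⟨hzI.1, hzm⟩ hz.1) hxr
    · have hy' : y ∈ Set.Icc m (1:ℝ) := ⟨le_trans hmz hz.2, hyI.2⟩
      exact le_trans (hmono ⟨hmz, hzI.2⟩ hy' hz.2) hyr
  · -- strict quasiconvexity
    intro hyp v₁ h1 v₂ h2 hne c hc
    have hφstrict : 0 < γ ∨ StrictAntiOn φ I := by
      rcases hyp with hγp | hsc
      · exact Or.inl hγp
      · refine Or.inr ?_
        have := hsc.strictAntiOn_deriv (fun x hx => (hlog x hx).differentiableAt)
        intro a ha b hb hab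
        rw [← hφd a ha, ← hφd b hb]
        exact this ha hb hab
    have hups : ∀ a ∈ I, ∀ b ∈ I, a < b → 0 ≤ h a → 0 < h b := by
      intro a ha b hb hab h0
      rw [hfactor a ha] at h0
      rw [hfactor b hb]
      have ha' : (1 - γ + 2 * γ * (1 - a)) * φ a ≤ 4 * γ := by
        nlinarith [hfpos a ha]
      have hst : 0 < γ ∨ φ b < φ a := by
        rcases hφstrict with hγp | hsa
        · exact Or.inl hγp
        · exact Or.inr (hsa ha hb hab)
      have := key1 γ hγ0 hγ1 hb.2 hab (hφanti ha hb hab.le) hst ha'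
      nlinarith [hfpos b hb]
    have claimB' : ∀ v ∈ I, m < v → v < 1 → 0 < h v := by
      intro v hv hmv hv1
      obtain ⟨w, hw, hwv⟩ := exists_lt_of_csInf_lt hTne hmv
      rcases hw with rfl | ⟨hwI, hw0⟩
      · exact absurd hwv (not_lt.mpr hv1.le)
      · exact hups w hwI v hv hwv hw0
    have hsanti : StrictAntiOn G (Set.Icc 0 m) := by
      apply strictAntiOn_of_deriv_neg (convex_Icc _ _) (hGcont.mono hIcc0m)
      intro x hx
      rw [interior_Icc] at hx
      have hxI := hIcc0m (Set.mem_Icc_of_Ioo hx)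
      rw [hGderiv x hxI]
      exact claimA x hxI hx.2
    have hsmono : StrictMonoOn G (Set.Icc m 1) := by
      apply strictMonoOn_of_deriv_pos (convex_Icc _ _) (hGcont.mono hIccm1)
      intro x hx
      rw [interior_Icc] at hx
      have hxI := hIccm1 (Set.mem_Icc_of_Ioo hx)
      rw [hGderiv x hxI]
      exact claimB' x hxI hx.1 hx.2
    have main : ∀ a ∈ I, ∀ b ∈ I, a < b → ∀ x, a < x → x < b → G x < max (G a) (G b) := by
      intro a ha b hb hab x hax hxb
      have hxI : x ∈ I := ⟨le_trans ha.1 hax.le, le_trans hxb.le hb.2⟩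
      rcases le_or_gt x m with hxm | hmx
      · have : G x < G a := hsanti ⟨ha.1, le_trans hax.le hxm⟩ ⟨hxI.1, hxm⟩ hax
        exact lt_max_of_lt_left this
      · have : G x < G b := hsmono ⟨hmx.le, hxI.2⟩ ⟨le_trans hmx.le hxb.le, hb.2⟩ hxb
        exact lt_max_of_lt_right this
    obtain ⟨hc0, hc1⟩ := hc
    rcases lt_or_gt_of_ne hne with hlt | hgt
    · have hx1 : v₁ < c * v₁ + (1 - c) * v₂ := by nlinarith
      have hx2 : c * v₁ + (1 - c) * v₂ < v₂ := by nlinarith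
      exact main v₁ h1 v₂ h2 hlt _ hx1 hx2
    · have hx1 : v₂ < c * v₁ + (1 - c) * v₂ := by nlinarith
      have hx2 : c * v₁ + (1 - c) * v₂ < v₁ := by nlinarith
      rw [max_comm]
      exact main v₂ h2 v₁ h1 hgt _ hx1 hx2
end

section
/- Under linear-quadratic Proposer utility u(a) = −(1−γ)|1−a| − γ(1−a)², the derivative of Proposer's welfare from the interval delegation set [c,1], namely W(c) := u(0)F(c/2) + u(c)(F(c)−F(c/2)) + ∫_c^1 u(v)f(v)dv + u(1)(1−F(1)), satisfies the identity W'(c) = ∫_{c/2}^{c} (v − c) G'(v) dv for c ∈ (0,1), where G(v) := 2γF(v) − (1−γ+2γ(1−v))f(v). -/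
/-!
Differentiating `W` gives `W'(c) = u'(c) (F c - F (c/2)) - (u c - u 0) f (c/2) / 2`. On `[0,1]`
the utility is quadratic, so its secant slope over `[0, c]` is its slope at the midpoint:
`u c - u 0 = c u'(c/2)`. With `u'(v) = 1 + γ - 2γv`, the right-hand side is then `Φ c - Φ (c/2)`
for `Φ v = u'(c) F v - (v - c) u'(v) f v`, and `Φ' v = (v - c) G' v`.
-/

open intervalIntegral Set

noncomputable section

namespace IntervalDelegation

def linQuadUtility (γ a : ℝ) : ℝ := -(1 - γ) * |1 - a| - γ * (1 - a) ^ 2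

def welfare (u F f : ℝ → ℝ) (c : ℝ) : ℝ :=
  u 0 * F (c / 2) + u c * (F c - F (c / 2)) + (∫ v in c..1, u v * f v) + u 1 * (1 - F 1)

theorem continuous_linQuadUtility (γ : ℝ) : Continuous (linQuadUtility γ) := by
  unfold linQuadUtility; fun_prop

theorem linQuadUtility_of_le_one (γ : ℝ) {a : ℝ} (ha : a ≤ 1) :
    linQuadUtility γ a = -(1 - γ) * (1 - a) - γ * (1 - a) ^ 2 := by
  rw [linQuadUtility, abs_of_nonneg (sub_nonneg.mpr ha)]

theorem hasDerivAt_linQuadUtility (γ : ℝ) {a : ℝ} (ha : a < 1) :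
    HasDerivAt (linQuadUtility γ) (1 + γ - 2 * γ * a) a := by
  have hquad : HasDerivAt (fun x => -(1 - γ) * (1 - x) - γ * (1 - x) ^ 2)
      (1 + γ - 2 * γ * a) a := by
    have hlin : HasDerivAt (fun x : ℝ => 1 - x) (-1) a := (hasDerivAt_id a).const_sub 1
    exact ((hlin.const_mul (-(1 - γ))).sub ((hlin.pow 2).const_mul γ)).congr_deriv
      (by push_cast; ring)
  refine hquad.congr_of_eventuallyEq ?_
  filter_upwards [Iio_mem_nhds ha] with x hx
  exact linQuadUtility_of_le_one γ (le_of_lt hx)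

theorem linQuadUtility_sub_linQuadUtility_zero (γ : ℝ) {c : ℝ} (hc : c ≤ 1) :
    linQuadUtility γ c - linQuadUtility γ 0 = c * (1 + γ - 2 * γ * (c / 2)) := by
  rw [linQuadUtility_of_le_one γ hc, linQuadUtility_of_le_one γ zero_le_one]
  ring

theorem hasDerivAt_welfare {u F f : ℝ → ℝ} {c du : ℝ} (hc : c ∈ Ioo 0 1)
    (hu : HasDerivAt u du c) (hFc : HasDerivAt F (f c) c)
    (hFc2 : HasDerivAt F (f (c / 2)) (c / 2))
    (huf : ContinuousOn (fun v => u v * f v) (Icc 0 1)) :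
    HasDerivAt (welfare u F f) (du * (F c - F (c / 2)) - (u c - u 0) * f (c / 2) / 2) c := by
  have hF_half : HasDerivAt (fun x => F (x / 2)) (f (c / 2) * (1 / 2)) c :=
    hFc2.comp c ((hasDerivAt_id c).div_const 2)
  have hint : HasDerivAt (fun x => ∫ v in x..1, u v * f v) (-(u c * f c)) c := by
    refine integral_hasDerivAt_left ?_ ?_ (huf.continuousAt (Icc_mem_nhds hc.1 hc.2))
    · refine (huf.mono ?_).intervalIntegrable
      rw [uIcc_of_le hc.2.le]
      exact Icc_subset_Icc_left hc.1.le
    · exact (huf.mono Ioo_subset_Icc_self).stronglyMeasurableAtFilter isOpen_Ioo _ hc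
  exact ((((hF_half.const_mul (u 0)).add (hu.mul (hFc.sub hF_half))).add hint).add_const
    (u 1 * (1 - F 1))).congr_deriv (by simp only [Pi.sub_apply]; ring)

section Antiderivative

variable {γ c v f'v : ℝ} {F f : ℝ → ℝ}

theorem hasDerivAt_G (hF : HasDerivAt F (f v) v) (hf : HasDerivAt f f'v v) :
    HasDerivAt (fun w => 2 * γ * F w - (1 - γ + 2 * γ * (1 - w)) * f w)
      (4 * γ * f v - (1 + γ - 2 * γ * v) * f'v) v := by
  have hcoef : HasDerivAt (fun w : ℝ => 1 - γ + 2 * γ * (1 - w)) (-(2 * γ)) v :=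
    ((((hasDerivAt_id v).const_sub 1).const_mul (2 * γ)).const_add (1 - γ)).congr_deriv
      (by ring)
  exact ((hF.const_mul (2 * γ)).sub (hcoef.mul hf)).congr_deriv (by ring)

theorem hasDerivAt_antiderivative (hF : HasDerivAt F (f v) v) (hf : HasDerivAt f f'v v) :
    HasDerivAt (fun w => (1 + γ - 2 * γ * c) * F w - (w - c) * (1 + γ - 2 * γ * w) * f w)
      ((v - c) * (4 * γ * f v - (1 + γ - 2 * γ * v) * f'v)) v := by
  have hpoly : HasDerivAt (fun w : ℝ => (w - c) * (1 + γ - 2 * γ * w))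
      (1 * (1 + γ - 2 * γ * v) + (v - c) * -(2 * γ * 1)) v :=
    ((hasDerivAt_id v).sub_const c).mul (((hasDerivAt_id v).const_mul (2 * γ)).const_sub _)
  exact ((hF.const_mul (1 + γ - 2 * γ * c)).sub (hpoly.mul hf)).congr_deriv (by ring)

end Antiderivative

theorem integral_sub_mul_deriv_G {γ a b c : ℝ} {F f f' G : ℝ → ℝ}
    (hF : ∀ v ∈ uIcc a b, HasDerivAt F (f v) v) (hf : ∀ v ∈ uIcc a b, HasDerivAt f (f' v) v)
    (hf'cont : ContinuousOn f' (uIcc a b))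
    (hG : ∀ v, G v = 2 * γ * F v - (1 - γ + 2 * γ * (1 - v)) * f v) :
    ∫ v in a..b, (v - c) * deriv G v =
      (1 + γ - 2 * γ * c) * (F b - F a)
        - ((b - c) * (1 + γ - 2 * γ * b) * f b - (a - c) * (1 + γ - 2 * γ * a) * f a) := by
  obtain rfl : G = fun w => 2 * γ * F w - (1 - γ + 2 * γ * (1 - w)) * f w := funext hG
  have hfcont : ContinuousOn f (uIcc a b) := fun v hv => (hf v hv).continuousAt.continuousWithinAt
  rw [integral_congr fun v hv => by rw [(hasDerivAt_G (hF v hv) (hf v hv)).deriv]]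
  rw [integral_eq_sub_of_hasDerivAt (fun v hv => hasDerivAt_antiderivative (hF v hv) (hf v hv))]
  · ring
  · refine ContinuousOn.intervalIntegrable ?_
    exact (continuousOn_id.sub continuousOn_const).mul
      ((continuousOn_const.mul hfcont).sub ((continuousOn_const.sub
        (continuousOn_const.mul continuousOn_id)).mul hf'cont))

end IntervalDelegation

open IntervalDelegation

theorem stmt_9_general (γ : ℝ)
    (u : ℝ → ℝ) (hu : ∀ a, u a = -(1 - γ) * |1 - a| - γ * (1 - a) ^ 2)
    (F f f' : ℝ → ℝ)
    (hf' : ∀ v ∈ Set.Icc (0:ℝ) 1, HasDerivAt f (f' v) v)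
    (hf'cont : ContinuousOn f' (Set.Icc 0 1))
    (hF : ∀ v ∈ Set.Icc (0:ℝ) 1, HasDerivAt F (f v) v)
    (G : ℝ → ℝ)
    (hG : ∀ v, G v = 2 * γ * F v - (1 - γ + 2 * γ * (1 - v)) * f v)
    (W : ℝ → ℝ)
    (hW : ∀ c, W c = u 0 * F (c / 2) + u c * (F c - F (c / 2)) +
      (∫ v in c..1, u v * f v) + u 1 * (1 - F 1)) :
    ∀ c ∈ Set.Ioo (0:ℝ) 1,
      HasDerivAt W (∫ v in (c / 2)..c, (v - c) * deriv G v) c := by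
  intro c hc
  obtain rfl : u = linQuadUtility γ := funext hu
  obtain rfl : W = welfare (linQuadUtility γ) F f := funext hW
  have hsub : uIcc (c / 2) c ⊆ Icc 0 1 := by
    rw [uIcc_of_le (by linarith [hc.1])]
    exact Icc_subset_Icc (by linarith [hc.1]) hc.2.le
  have hfcont : ContinuousOn f (Icc 0 1) := fun v hv => (hf' v hv).continuousAt.continuousWithinAt
  rw [integral_sub_mul_deriv_G (fun v hv => hF v (hsub hv)) (fun v hv => hf' v (hsub hv))
    (hf'cont.mono hsub) hG]
  convert hasDerivAt_welfare hc (hasDerivAt_linQuadUtility γ hc.2) (hF c (hsub right_mem_uIcc))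
    (hF (c / 2) (hsub left_mem_uIcc)) ((continuous_linQuadUtility γ).continuousOn.mul hfcont)
    using 1
  rw [linQuadUtility_sub_linQuadUtility_zero γ hc.2.le]
  ring

/-- Under linear-quadratic Proposer utility, the derivative of the
welfare `W` from interval delegation `[c,1]` satisfies
`W'(c) = ∫_{c/2}^{c} (v − c) G'(v) dv` for `c ∈ (0,1)`. -/
theorem stmt_9 (γ : ℝ) (hγ : γ ∈ Set.Icc (0:ℝ) 1)
    (u : ℝ → ℝ) (hu : ∀ a, u a = -(1 - γ) * |1 - a| - γ * (1 - a) ^ 2)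
    (F f f' : ℝ → ℝ)
    (hfpos : ∀ v ∈ Set.Icc (0:ℝ) 1, 0 < f v)
    (hf' : ∀ v ∈ Set.Icc (0:ℝ) 1, HasDerivAt f (f' v) v)
    (hf'cont : ContinuousOn f' (Set.Icc 0 1))
    (hF : ∀ v ∈ Set.Icc (0:ℝ) 1, HasDerivAt F (f v) v)
    (G : ℝ → ℝ)
    (hG : ∀ v, G v = 2 * γ * F v - (1 - γ + 2 * γ * (1 - v)) * f v)
    (W : ℝ → ℝ)
    (hW : ∀ c, W c = u 0 * F (c / 2) + u c * (F c - F (c / 2)) +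
      (∫ v in c..1, u v * f v) + u 1 * (1 - F 1)) :
    ∀ c ∈ Set.Ioo (0:ℝ) 1,
      HasDerivAt W (∫ v in (c / 2)..c, (v - c) * deriv G v) c :=
  stmt_9_general γ u hu F f f' hf' hf'cont hF G hG W hW
end
end

section
/- Assume u(a) = −(1−γ)|1−a| − γ(1−a)² with γ ∈ [0,1] and that f is logconcave on [0,1]. Then W(c) := u(0)F(c/2) + u(c)(F(c)−F(c/2)) + ∫_c^1 u(v)f(v)dv + u(1)(1−F(1)) is quasiconcave on [0,1], and strictly quasiconcave if γ > 0 or f is strictly logconcave on [0,1]. -/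
/-!
Write `φ(w) = 1 - γ + 2γ(1 - w)` for `u'` on `[0, 1)` and `G = 2γF - φ f`. On `(0, 1)`,
`W'(c) = φ(c) (F(c) - F(c/2)) - (c/2) φ(c/2) f(c/2) = ∫_{c/2}^c (w - c) G'(w) dw`:
the first form because `u` is quadratic on `[0, 1]`, so `u(c) - u(0) = c φ(c/2)`; the second
by integrating by parts. Log-concavity makes `f'/f` antitone, and `φ ≥ 0` is antitone, so
`G' = f (4γ - φ f'/f)`, once nonnegative, stays nonnegative (positive, under the strict
hypotheses): `G'` changes sign once, at some `s`. For `a < b` the weights satisfy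
`(w - b) G'(w) ≤ k (w - a) G'(w)` with `k = (b - s)/(a - s) ≥ 1`, which carries `W'(a) ≤ 0`
over to `W'(b) ≤ 0` (and `< 0`). So `W'` is positive and then nonpositive, and `W` is
quasiconcave.
-/

open Set
open MeasureTheory (volume IntegrableOn)
open intervalIntegral

section DerivSign

variable {f : ℝ → ℝ}

theorem min_le_of_deriv_nonpos_propagates {x y z : ℝ} (hxz : x < z) (hzy : z < y)
    (hf : ContinuousOn f (Icc x y)) (hf' : DifferentiableOn ℝ f (Ioo x y))
    (hcross : ∀ a ∈ Ioo x y, ∀ b ∈ Ioo x y, a < b → deriv f a ≤ 0 → deriv f b ≤ 0) :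
    min (f x) (f y) ≤ f z := by
  by_cases h : ∃ a ∈ Ioo x z, deriv f a ≤ 0
  · obtain ⟨a, ha, hfa⟩ := h
    have hanti : AntitoneOn f (Icc z y) := by
      refine antitoneOn_of_deriv_nonpos (convex_Icc z y) (hf.mono (Icc_subset_Icc hxz.le le_rfl))
        (hf'.mono ?_) fun b hb => ?_
      · rw [interior_Icc]
        exact Ioo_subset_Ioo_left hxz.le
      · rw [interior_Icc] at hb
        exact hcross a ⟨ha.1, ha.2.trans hzy⟩ b ⟨hxz.trans hb.1, hb.2⟩ (ha.2.trans hb.1) hfa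
    exact (min_le_right _ _).trans (hanti ⟨le_rfl, hzy.le⟩ ⟨hzy.le, le_rfl⟩ hzy.le)
  · push Not at h
    have hmono : StrictMonoOn f (Icc x z) := by
      refine strictMonoOn_of_deriv_pos (convex_Icc x z) (hf.mono (Icc_subset_Icc le_rfl hzy.le))
        fun a ha => ?_
      rw [interior_Icc] at ha
      exact h a ha
    exact (min_le_left _ _).trans (hmono ⟨le_rfl, hxz.le⟩ ⟨hxz.le, le_rfl⟩ hxz).le

theorem min_lt_of_deriv_neg_propagates {x y z : ℝ} (hxz : x < z) (hzy : z < y)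
    (hf : ContinuousOn f (Icc x y))
    (hcross : ∀ a ∈ Ioo x y, ∀ b ∈ Ioo x y, a < b → deriv f a ≤ 0 → deriv f b < 0) :
    min (f x) (f y) < f z := by
  by_cases h : ∃ a ∈ Ioo x z, deriv f a ≤ 0
  · obtain ⟨a, ha, hfa⟩ := h
    have hanti : StrictAntiOn f (Icc z y) := by
      refine strictAntiOn_of_deriv_neg (convex_Icc z y) (hf.mono (Icc_subset_Icc hxz.le le_rfl))
        fun b hb => ?_
      rw [interior_Icc] at hb
      exact hcross a ⟨ha.1, ha.2.trans hzy⟩ b ⟨hxz.trans hb.1, hb.2⟩ (ha.2.trans hb.1) hfa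
    exact (min_le_right _ _).trans_lt (hanti ⟨le_rfl, hzy.le⟩ ⟨hzy.le, le_rfl⟩ hzy)
  · push Not at h
    have hmono : StrictMonoOn f (Icc x z) := by
      refine strictMonoOn_of_deriv_pos (convex_Icc x z) (hf.mono (Icc_subset_Icc le_rfl hzy.le))
        fun a ha => ?_
      rw [interior_Icc] at ha
      exact h a ha
    exact (min_le_left _ _).trans_lt (hmono ⟨le_rfl, hxz.le⟩ ⟨hxz.le, le_rfl⟩ hxz)

variable {s : Set ℝ}

theorem quasiconcaveOn_of_deriv_nonpos_propagates (hs : Convex ℝ s) (hf : ContinuousOn f s)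
    (hf' : DifferentiableOn ℝ f (interior s))
    (hcross : ∀ a ∈ interior s, ∀ b ∈ interior s, a < b → deriv f a ≤ 0 → deriv f b ≤ 0) :
    QuasiconcaveOn ℝ s f := by
  refine fun r => OrdConnected.convex
    ⟨fun x hx y hy z hz => ⟨hs.ordConnected.out hx.1 hy.1 hz, ?_⟩⟩
  have hsub : Icc x y ⊆ s := hs.ordConnected.out hx.1 hy.1
  have hint : Ioo x y ⊆ interior s := by
    simpa only [interior_Icc] using interior_mono hsub
  rcases hz.1.eq_or_lt with rfl | hxz
  · exact hx.2
  rcases hz.2.eq_or_lt with rfl | hzy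
  · exact hy.2
  exact (le_min hx.2 hy.2).trans <| min_le_of_deriv_nonpos_propagates hxz hzy (hf.mono hsub)
    (hf'.mono hint) fun a ha b hb => hcross a (hint ha) b (hint hb)

theorem forall_min_lt_of_deriv_neg_propagates (hs : Convex ℝ s) (hf : ContinuousOn f s)
    (hcross : ∀ a ∈ interior s, ∀ b ∈ interior s, a < b → deriv f a ≤ 0 → deriv f b < 0) :
    ∀ x ∈ s, ∀ y ∈ s, x ≠ y → ∀ t ∈ Ioo (0:ℝ) 1,
      min (f x) (f y) < f (t * x + (1 - t) * y) := by
  have key : ∀ x ∈ s, ∀ y ∈ s, x < y → ∀ t ∈ Ioo (0:ℝ) 1,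
      min (f x) (f y) < f (t * x + (1 - t) * y) := by
    intro x hx y hy hxy t ht
    have hsub : Icc x y ⊆ s := hs.ordConnected.out hx hy
    have hint : Ioo x y ⊆ interior s := by
      simpa only [interior_Icc] using interior_mono hsub
    exact min_lt_of_deriv_neg_propagates (by nlinarith [ht.1, ht.2]) (by nlinarith [ht.1, ht.2])
      (hf.mono hsub) fun a ha b hb => hcross a (hint ha) b (hint hb)
  intro x hx y hy hxy t ht
  rcases hxy.lt_or_gt with hlt | hlt
  · exact key x hx y hy hlt t ht
  · have := key y hy x hx hlt (1 - t) ⟨by linarith [ht.2], by linarith [ht.1]⟩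
    rwa [min_comm, sub_sub_cancel, add_comm] at this

end DerivSign

theorem intervalIntegral.integral_nonpos {φ : ℝ → ℝ} {p q : ℝ} (hpq : p ≤ q)
    (h : ∀ w ∈ Icc p q, φ w ≤ 0) : ∫ w in p..q, φ w ≤ 0 := by
  have := integral_nonneg (μ := volume) hpq fun w hw => neg_nonneg.2 (h w hw)
  rwa [intervalIntegral.integral_neg, neg_nonneg] at this

section LogConcave

variable {f : ℝ → ℝ} {S : Set ℝ}

theorem ConcaveOn.antitoneOn_deriv_div (hlc : ConcaveOn ℝ S (fun v => Real.log (f v)))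
    (hpos : ∀ x ∈ S, 0 < f x) (hf : ∀ x ∈ S, DifferentiableAt ℝ f x) :
    AntitoneOn (fun x => deriv f x / f x) S := by
  have hL : ∀ x ∈ S, HasDerivAt (fun v => Real.log (f v)) (deriv f x / f x) x :=
    fun x hx => (hf x hx).hasDerivAt.log (hpos x hx).ne'
  intro x hx y hy hxy
  have := hlc.antitoneOn_deriv (fun v hv => (hL v hv).differentiableAt) hx hy hxy
  rwa [(hL x hx).deriv, (hL y hy).deriv] at this

theorem StrictConcaveOn.strictAntiOn_deriv_div
    (hlc : StrictConcaveOn ℝ S (fun v => Real.log (f v)))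
    (hpos : ∀ x ∈ S, 0 < f x) (hf : ∀ x ∈ S, DifferentiableAt ℝ f x) :
    StrictAntiOn (fun x => deriv f x / f x) S := by
  have hL : ∀ x ∈ S, HasDerivAt (fun v => Real.log (f v)) (deriv f x / f x) x :=
    fun x hx => (hf x hx).hasDerivAt.log (hpos x hx).ne'
  intro x hx y hy hxy
  have := hlc.strictAntiOn_deriv (fun v hv => (hL v hv).differentiableAt) hx hy hxy
  rwa [(hL x hx).deriv, (hL y hy).deriv] at this

end LogConcave

namespace IntervalDelegation

noncomputable section

/-- `u'` on `[0, 1)`. -/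
def marginalUtility (γ w : ℝ) : ℝ := 1 - γ + 2 * γ * (1 - w)

theorem hasDerivAt_marginalUtility (γ w : ℝ) :
    HasDerivAt (marginalUtility γ) (-(2 * γ)) w := by
  have := (((hasDerivAt_id w).const_sub 1).const_mul (2 * γ)).const_add (1 - γ)
  exact this.congr_deriv (by ring)

section Crossing

variable {γ x y rx ry : ℝ}

theorem marginalUtility_mul_le (hγ : γ ∈ Icc (0:ℝ) 1) (hy : y ≤ 1) (hxy : x ≤ y) (hr : ry ≤ rx)
    (h : marginalUtility γ x * rx ≤ 4 * γ) : marginalUtility γ y * ry ≤ 4 * γ := by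
  unfold marginalUtility at *
  obtain ⟨hγ0, hγ1⟩ := hγ
  have hφy : 0 ≤ 1 - γ + 2 * γ * (1 - y) := by nlinarith
  rcases le_or_gt ry 0 with hry | hry
  · nlinarith
  · have hrx : 0 < rx := hry.trans_le hr
    nlinarith [mul_le_mul_of_nonneg_left hr hφy,
      mul_nonneg (mul_nonneg hγ0 (sub_nonneg.2 hxy)) hrx.le]

theorem marginalUtility_mul_lt (hγ : γ ∈ Icc (0:ℝ) 1) (hy : y ≤ 1) (hxy : x < y) (hr : ry ≤ rx)
    (hstrict : 0 < γ ∨ ry < rx) (h : marginalUtility γ x * rx ≤ 4 * γ) :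
    marginalUtility γ y * ry < 4 * γ := by
  unfold marginalUtility at *
  obtain ⟨hγ0, hγ1⟩ := hγ
  have hφy : 0 ≤ 1 - γ + 2 * γ * (1 - y) := by nlinarith
  rcases hγ0.lt_or_eq with hγ0 | rfl
  · rcases le_or_gt ry 0 with hry | hry
    · nlinarith
    · have hrx : 0 < rx := hry.trans_le hr
      nlinarith [mul_le_mul_of_nonneg_left hr hφy, mul_pos (mul_pos hγ0 (sub_pos.2 hxy)) hrx]
  · have hr : ry < rx := hstrict.resolve_left (lt_irrefl 0)
    nlinarith

end Crossing

/-- The paper's `G`. -/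
def G (γ : ℝ) (F f : ℝ → ℝ) (v : ℝ) : ℝ := 2 * γ * F v - marginalUtility γ v * f v

def dG (γ : ℝ) (f : ℝ → ℝ) (v : ℝ) : ℝ := 4 * γ * f v - marginalUtility γ v * deriv f v

section DensityTerms

variable {γ : ℝ} {F f : ℝ → ℝ}

theorem hasDerivAt_G_s10 {v : ℝ} (hF : HasDerivAt F (f v) v) (hf : DifferentiableAt ℝ f v) :
    HasDerivAt (G γ F f) (dG γ f v) v := by
  have := (hF.const_mul (2 * γ)).sub ((hasDerivAt_marginalUtility γ v).mul hf.hasDerivAt)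
  exact this.congr_deriv (by unfold dG; ring)

theorem continuousOn_dG (hf : ∀ v ∈ Icc (0:ℝ) 1, DifferentiableAt ℝ f v)
    (hf' : ContinuousOn (deriv f) (Icc 0 1)) : ContinuousOn (dG γ f) (Icc 0 1) := by
  have hfc : ContinuousOn f (Icc 0 1) := fun v hv => (hf v hv).continuousAt.continuousWithinAt
  unfold dG marginalUtility
  fun_prop

theorem dG_eq_mul {v : ℝ} (hfv : f v ≠ 0) :
    dG γ f v = f v * (4 * γ - marginalUtility γ v * (deriv f v / f v)) := by
  unfold dG
  field_simp

variable (hγ : γ ∈ Icc (0:ℝ) 1) (hfpos : ∀ v ∈ Icc (0:ℝ) 1, 0 < f v)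
  (hf : ∀ v ∈ Icc (0:ℝ) 1, DifferentiableAt ℝ f v)
include hγ hfpos hf

theorem dG_nonneg_of_le (hlc : ConcaveOn ℝ (Icc 0 1) (fun v => Real.log (f v)))
    {x y : ℝ} (hx : x ∈ Icc (0:ℝ) 1) (hy : y ∈ Icc (0:ℝ) 1) (hxy : x ≤ y)
    (h : 0 ≤ dG γ f x) : 0 ≤ dG γ f y := by
  rw [dG_eq_mul (hfpos x hx).ne', mul_nonneg_iff_of_pos_left (hfpos x hx), sub_nonneg] at h
  rw [dG_eq_mul (hfpos y hy).ne', mul_nonneg_iff_of_pos_left (hfpos y hy), sub_nonneg]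
  exact marginalUtility_mul_le hγ hy.2 hxy (hlc.antitoneOn_deriv_div hfpos hf hx hy hxy) h

theorem dG_pos_of_lt (hlc : ConcaveOn ℝ (Icc 0 1) (fun v => Real.log (f v)))
    (hstrict : 0 < γ ∨ StrictConcaveOn ℝ (Icc 0 1) (fun v => Real.log (f v)))
    {x y : ℝ} (hx : x ∈ Icc (0:ℝ) 1) (hy : y ∈ Icc (0:ℝ) 1) (hxy : x < y)
    (h : 0 ≤ dG γ f x) : 0 < dG γ f y := by
  rw [dG_eq_mul (hfpos x hx).ne', mul_nonneg_iff_of_pos_left (hfpos x hx), sub_nonneg] at h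
  rw [dG_eq_mul (hfpos y hy).ne', mul_pos_iff_of_pos_left (hfpos y hy), sub_pos]
  refine marginalUtility_mul_lt hγ hy.2 hxy (hlc.antitoneOn_deriv_div hfpos hf hx hy hxy.le)
    (hstrict.imp_right fun hs => hs.strictAntiOn_deriv_div hfpos hf hx hy hxy) h

end DensityTerms

def halfMoment (g : ℝ → ℝ) (c : ℝ) : ℝ := ∫ w in c / 2..c, (w - c) * g w

/-- With `k = (b - s) / (a - s) ≥ 1`, `(w - b) - k (w - a) = (1 - k) (w - s)` has the sign
opposite to that of `y`. -/
theorem sub_mul_le_div_mul {s a b w y : ℝ} (hsa : s < a) (hab : a ≤ b)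
    (hneg : w < s → y ≤ 0) (hpos : s ≤ w → 0 ≤ y) :
    (w - b) * y ≤ (b - s) / (a - s) * ((w - a) * y) := by
  have has : 0 < a - s := by linarith
  have hk : (b - s) / (a - s) * (a - s) = b - s := div_mul_cancel₀ _ has.ne'
  have hk1 : 1 ≤ (b - s) / (a - s) := by rw [le_div_iff₀ has]; linarith
  have hdiff : (w - b) * y - (b - s) / (a - s) * ((w - a) * y)
      = ((1 - (b - s) / (a - s)) * (w - s)) * y := by
    linear_combination y * hk
  rcases lt_or_ge w s with hws | hsw
  · nlinarith [mul_nonpos_of_nonneg_of_nonpos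
      (mul_nonneg_of_nonpos_of_nonpos (by linarith : 1 - (b - s) / (a - s) ≤ 0)
        (by linarith : w - s ≤ 0)) (hneg hws)]
  · nlinarith [mul_nonpos_of_nonpos_of_nonneg
      (mul_nonpos_of_nonpos_of_nonneg (by linarith : 1 - (b - s) / (a - s) ≤ 0)
        (by linarith : 0 ≤ w - s)) (hpos hsw)]

section HalfMoment

variable {g : ℝ → ℝ} (hg : ContinuousOn g (Icc 0 1))
include hg

theorem intervalIntegrable_sub_mul (c : ℝ) {p q : ℝ} (hp : p ∈ Icc (0:ℝ) 1)
    (hq : q ∈ Icc (0:ℝ) 1) : IntervalIntegrable (fun w => (w - c) * g w) volume p q :=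
  ((continuousOn_id.sub continuousOn_const).mul
    (hg.mono (uIcc_subset_Icc hp hq))).intervalIntegrable

theorem exists_nonneg_of_halfMoment_nonpos {a : ℝ} (ha : 0 < a) (ha1 : a ≤ 1)
    (h : halfMoment g a ≤ 0) : ∃ w ∈ Ioo (a / 2) a, 0 ≤ g w := by
  by_contra! hneg
  have : 0 < halfMoment g a :=
    intervalIntegral_pos_of_pos_on
      (intervalIntegrable_sub_mul hg a ⟨by linarith, by linarith⟩ ⟨ha.le, ha1⟩)
      (fun w hw => mul_pos_of_neg_of_neg (by linarith [hw.2]) (hneg w hw)) (by linarith)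
  linarith

theorem exists_crossing_point {a : ℝ} (ha : 0 < a) (ha1 : a ≤ 1) (h : halfMoment g a ≤ 0) :
    ∃ s, 0 ≤ s ∧ s < a ∧ 0 ≤ g s ∧ ∀ w ∈ Icc (0:ℝ) 1, w < s → g w < 0 := by
  obtain ⟨w₀, hw₀, hgw₀⟩ := exists_nonneg_of_halfMoment_nonpos hg ha ha1 h
  set S := Icc (0:ℝ) 1 ∩ g ⁻¹' Ici 0
  have hbdd : BddBelow S := ⟨0, fun w hw => hw.1.1⟩
  have hw₀S : w₀ ∈ S := ⟨⟨by linarith [hw₀.1], by linarith [hw₀.2]⟩, hgw₀⟩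
  have hmem : sInf S ∈ S :=
    (hg.preimage_isClosed_of_isClosed isClosed_Icc isClosed_Ici).csInf_mem ⟨w₀, hw₀S⟩ hbdd
  refine ⟨sInf S, hmem.1.1, (csInf_le hbdd hw₀S).trans_lt hw₀.2, hmem.2, fun w hw hws => ?_⟩
  by_contra! hgw
  exact (csInf_le hbdd ⟨hw, hgw⟩).not_gt hws

variable {s : ℝ} (hneg : ∀ w ∈ Icc (0:ℝ) 1, w < s → g w ≤ 0)
  (hpos : ∀ w ∈ Icc (0:ℝ) 1, s ≤ w → 0 ≤ g w)
include hneg hpos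

theorem integral_sub_mul_nonpos_of_halfMoment_nonpos {a m : ℝ} (ha1 : a ≤ 1)
    (hm : m ∈ Icc (a / 2) a) (h : halfMoment g a ≤ 0) : ∫ w in m..a, (w - a) * g w ≤ 0 := by
  have ha0 : 0 ≤ a := by linarith [hm.1, hm.2]
  have hm01 : m ∈ Icc (0:ℝ) 1 := ⟨by linarith [hm.1], by linarith [hm.2]⟩
  rcases lt_or_ge m s with hms | hsm
  · have hhead : 0 ≤ ∫ w in a / 2..m, (w - a) * g w :=
      integral_nonneg hm.1 fun w hw => mul_nonneg_of_nonpos_of_nonpos (by linarith [hw.2, hm.2])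
        (hneg w ⟨by linarith [hw.1], by linarith [hw.2, hm.2]⟩ (by linarith [hw.2]))
    have hsplit := integral_add_adjacent_intervals
      (intervalIntegrable_sub_mul hg a (p := a / 2) ⟨by linarith, by linarith⟩ hm01)
      (intervalIntegrable_sub_mul hg a hm01 ⟨ha0, ha1⟩)
    unfold halfMoment at h
    linarith
  · refine intervalIntegral.integral_nonpos hm.2 fun w hw => mul_nonpos_of_nonpos_of_nonneg
      (by linarith [hw.2]) (hpos w ⟨?_, ?_⟩ (hsm.trans hw.1)) <;> linarith [hw.1, hw.2, hm.1]

theorem halfMoment_le_integral (hs0 : 0 ≤ s) {a b : ℝ} (hsa : s < a) (hab : a ≤ b) (hb1 : b ≤ 1)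
    (h : halfMoment g a ≤ 0) : halfMoment g b ≤ ∫ w in max a (b / 2)..b, (w - b) * g w := by
  rcases le_total a (b / 2) with hab2 | hab2
  · rw [max_eq_right hab2]; rfl
  rw [max_eq_left hab2]
  have hb2 : b / 2 ∈ Icc (0:ℝ) 1 := ⟨by linarith, by linarith⟩
  have ha : a ∈ Icc (0:ℝ) 1 := ⟨by linarith, hab.trans hb1⟩
  have hk : 0 ≤ (b - s) / (a - s) := div_nonneg (by linarith) (by linarith)
  have hhead : ∫ w in b / 2..a, (w - b) * g w
      ≤ (b - s) / (a - s) * ∫ w in b / 2..a, (w - a) * g w := by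
    rw [← intervalIntegral.integral_const_mul]
    refine integral_mono_on hab2 (intervalIntegrable_sub_mul hg b hb2 ha)
      ((intervalIntegrable_sub_mul hg a hb2 ha).const_mul _) fun w hw => ?_
    have hw : w ∈ Icc (0:ℝ) 1 := ⟨by linarith [hw.1], by linarith [hw.2, ha.2]⟩
    exact sub_mul_le_div_mul hsa hab (hneg w hw) (hpos w hw)
  have htail := integral_sub_mul_nonpos_of_halfMoment_nonpos hg hneg hpos ha.2
    ⟨by linarith, hab2⟩ h
  calc halfMoment g b
      = (∫ w in b / 2..a, (w - b) * g w) + ∫ w in a..b, (w - b) * g w :=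
        (integral_add_adjacent_intervals (intervalIntegrable_sub_mul hg b hb2 ha)
          (intervalIntegrable_sub_mul hg b ha ⟨by linarith, hb1⟩)).symm
    _ ≤ ∫ w in a..b, (w - b) * g w := by
        linarith [mul_nonpos_of_nonneg_of_nonpos hk htail]

omit hneg hpos

theorem halfMoment_nonpos_of_lt
    (hcross : ∀ x ∈ Icc (0:ℝ) 1, ∀ y ∈ Icc (0:ℝ) 1, x ≤ y → 0 ≤ g x → 0 ≤ g y)
    {a b : ℝ} (ha : 0 < a) (hab : a < b) (hb1 : b ≤ 1) (h : halfMoment g a ≤ 0) :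
    halfMoment g b ≤ 0 := by
  obtain ⟨s, hs0, hsa, hgs, hneg⟩ := exists_crossing_point hg ha (hab.le.trans hb1) h
  have hpos : ∀ w ∈ Icc (0:ℝ) 1, s ≤ w → 0 ≤ g w :=
    fun w hw hsw => hcross s ⟨hs0, by linarith⟩ w hw hsw hgs
  refine (halfMoment_le_integral hg (fun w hw hws => (hneg w hw hws).le) hpos hs0 hsa hab.le hb1
    h).trans (intervalIntegral.integral_nonpos (max_le hab.le (by linarith)) fun w hw => ?_)
  have haw : a ≤ w := (le_max_left _ _).trans hw.1
  exact mul_nonpos_of_nonpos_of_nonneg (by linarith [hw.2])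
    (hpos w ⟨by linarith, hw.2.trans hb1⟩ (by linarith))

theorem halfMoment_neg_of_lt
    (hcross : ∀ x ∈ Icc (0:ℝ) 1, ∀ y ∈ Icc (0:ℝ) 1, x < y → 0 ≤ g x → 0 < g y)
    {a b : ℝ} (ha : 0 < a) (hab : a < b) (hb1 : b ≤ 1) (h : halfMoment g a ≤ 0) :
    halfMoment g b < 0 := by
  obtain ⟨s, hs0, hsa, hgs, hneg⟩ := exists_crossing_point hg ha (hab.le.trans hb1) h
  have hpos : ∀ w ∈ Icc (0:ℝ) 1, s < w → 0 < g w :=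
    fun w hw hsw => hcross s ⟨hs0, by linarith⟩ w hw hsw hgs
  have hm : max a (b / 2) ∈ Icc (0:ℝ) 1 := ⟨by positivity, max_le (hab.le.trans hb1) (by linarith)⟩
  have htail : 0 < ∫ w in max a (b / 2)..b, -((w - b) * g w) := by
    refine intervalIntegral_pos_of_pos_on
      (intervalIntegrable_sub_mul hg b hm ⟨by linarith, hb1⟩).neg (fun w hw => ?_)
      (max_lt hab (by linarith))
    have haw : a < w := (le_max_left _ _).trans_lt hw.1
    exact neg_pos.2 (mul_neg_of_neg_of_pos (by linarith [hw.2])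
      (hpos w ⟨by linarith, hw.2.le.trans hb1⟩ (by linarith)))
  rw [intervalIntegral.integral_neg, neg_pos] at htail
  refine (halfMoment_le_integral hg (fun w hw hws => (hneg w hw hws).le) ?_ hs0 hsa hab.le hb1
    h).trans_lt htail
  intro w hw hsw
  rcases hsw.eq_or_lt with rfl | hlt
  · exact hgs
  · exact (hpos w hw hlt).le

end HalfMoment

theorem halfMoment_dG {γ c : ℝ} {F f : ℝ → ℝ} (hF : ∀ v ∈ Icc (0:ℝ) 1, HasDerivAt F (f v) v)
    (hf : ∀ v ∈ Icc (0:ℝ) 1, DifferentiableAt ℝ f v) (hf' : ContinuousOn (deriv f) (Icc 0 1))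
    (hc0 : 0 ≤ c) (hc1 : c ≤ 1) :
    halfMoment (dG γ f) c =
      marginalUtility γ c * (F c - F (c / 2)) - c / 2 * marginalUtility γ (c / 2) * f (c / 2) := by
  have hsub : uIcc (c / 2) c ⊆ Icc 0 1 :=
    uIcc_subset_Icc ⟨by linarith, by linarith⟩ ⟨hc0, hc1⟩
  have hH : ∀ w ∈ uIcc (c / 2) c, HasDerivAt
      (fun w => (w - c) * G γ F f w + marginalUtility γ w * F w) ((w - c) * dG γ f w) w := by
    intro w hw
    have hGw := hasDerivAt_G_s10 (γ := γ) (hF w (hsub hw)) (hf w (hsub hw))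
    have := (((hasDerivAt_id w).sub_const c).mul hGw).add
      ((hasDerivAt_marginalUtility γ w).mul (hF w (hsub hw)))
    exact this.congr_deriv (by simp only [G, id]; ring)
  rw [halfMoment, integral_eq_sub_of_hasDerivAt hH
    (intervalIntegrable_sub_mul (continuousOn_dG hf hf') c ⟨by linarith, by linarith⟩ ⟨hc0, hc1⟩)]
  simp only [G, marginalUtility]
  ring

section Welfare

variable {γ : ℝ} {u : ℝ → ℝ} (hu : ∀ a, u a = -(1 - γ) * |1 - a| - γ * (1 - a) ^ 2)
include hu

theorem continuous_utility : Continuous u := by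
  rw [show u = _ from funext hu]
  fun_prop

theorem utility_sub_utility_zero {c : ℝ} (hc1 : c ≤ 1) :
    u c - u 0 = c * marginalUtility γ (c / 2) := by
  simp only [hu, sub_zero, abs_one, abs_of_nonneg (sub_nonneg.2 hc1), marginalUtility]
  ring

theorem hasDerivAt_utility {c : ℝ} (hc1 : c < 1) : HasDerivAt u (marginalUtility γ c) c := by
  have h1 := (hasDerivAt_id c).const_sub 1
  have hpoly := (h1.const_mul (-(1 - γ))).sub ((h1.pow 2).const_mul γ)
  refine (hpoly.congr_deriv (by unfold marginalUtility; simp only [id]; ring))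
    |>.congr_of_eventuallyEq ?_
  filter_upwards [Iio_mem_nhds hc1] with a ha
  rw [hu, abs_of_pos (by linarith [mem_Iio.1 ha] : (0:ℝ) < 1 - a)]
  rfl

variable {F f W : ℝ → ℝ} (hF : ∀ v ∈ Icc (0:ℝ) 1, HasDerivAt F (f v) v)
  (hf : ContinuousOn f (Icc 0 1))
  (hW : ∀ c, W c = u 0 * F (c / 2) + u c * (F c - F (c / 2)) +
      (∫ v in c..1, u v * f v) + u 1 * (1 - F 1))
include hF hf hW

theorem continuousOn_welfare : ContinuousOn W (Icc 0 1) := by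
  have hFc : ContinuousOn F (Icc 0 1) := fun v hv => (hF v hv).continuousAt.continuousWithinAt
  have hFc2 : ContinuousOn (fun c : ℝ => F (c / 2)) (Icc 0 1) :=
    hFc.comp (continuous_id.div_const 2).continuousOn
      fun c hc => ⟨by linarith [hc.1], by linarith [hc.2]⟩
  have hint : ContinuousOn (fun c : ℝ => ∫ v in c..1, u v * f v) (Icc 0 1) := by
    have hI : IntegrableOn (fun v => u v * f v) (uIcc 0 1) := by
      rw [uIcc_of_le zero_le_one]
      exact ((continuous_utility hu).continuousOn.mul hf).integrableOn_compact isCompact_Icc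
    simpa only [uIcc_of_le zero_le_one] using continuousOn_primitive_interval_left hI
  rw [show W = _ from funext hW]
  exact (((continuousOn_const.mul hFc2).add ((continuous_utility hu).continuousOn.mul
    (hFc.sub hFc2))).add hint).add continuousOn_const

theorem hasDerivAt_welfare_s10 {c : ℝ} (hc : c ∈ Ioo (0:ℝ) 1) :
    HasDerivAt W (marginalUtility γ c * (F c - F (c / 2))
      - c / 2 * marginalUtility γ (c / 2) * f (c / 2)) c := by
  have hFhalf : HasDerivAt (fun x => F (x / 2)) (f (c / 2) * (1 / 2)) c :=
    (hF (c / 2) ⟨by linarith [hc.1], by linarith [hc.2]⟩).comp c ((hasDerivAt_id c).div_const 2)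
  have hfc : ContinuousAt f c := hf.continuousAt (Icc_mem_nhds hc.1 hc.2)
  have huf : ContinuousOn (fun v => u v * f v) (Icc 0 1) :=
    (continuous_utility hu).continuousOn.mul hf
  have hint : HasDerivAt (fun x => ∫ v in x..1, u v * f v) (-(u c * f c)) c :=
    integral_hasDerivAt_left
      (huf.mono (uIcc_subset_Icc ⟨hc.1.le, hc.2.le⟩ ⟨zero_le_one, le_rfl⟩)).intervalIntegrable
      ((huf.mono Ioo_subset_Icc_self).stronglyMeasurableAtFilter isOpen_Ioo c hc)
      ((continuous_utility hu).continuousAt.mul hfc)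
  have hsum := (((hFhalf.const_mul (u 0)).add ((hasDerivAt_utility hu hc.2).mul
    ((hF c ⟨hc.1.le, hc.2.le⟩).sub hFhalf))).add hint).add_const (u 1 * (1 - F 1))
  rw [show W = _ from funext hW]
  refine hsum.congr_deriv ?_
  simp only [Pi.sub_apply]
  linear_combination (-(f (c / 2)) / 2) * utility_sub_utility_zero hu hc.2.le

end Welfare

end

end IntervalDelegation

open IntervalDelegation

/-- Under linear-quadratic Proposer utility and a logconcave type
density, the welfare `W` from interval delegation is quasiconcave on `[0,1]`,
strictly so if `γ > 0` or `f` is strictly logconcave. -/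
theorem stmt_10 (γ : ℝ) (hγ : γ ∈ Set.Icc (0:ℝ) 1)
    (u : ℝ → ℝ) (hu : ∀ a, u a = -(1 - γ) * |1 - a| - γ * (1 - a) ^ 2)
    (F f : ℝ → ℝ)
    (hfpos : ∀ v ∈ Set.Icc (0:ℝ) 1, 0 < f v)
    (hfC1 : ∀ v ∈ Set.Icc (0:ℝ) 1, DifferentiableAt ℝ f v)
    (hfC1' : ContinuousOn (deriv f) (Set.Icc 0 1))
    (hF : ∀ v ∈ Set.Icc (0:ℝ) 1, HasDerivAt F (f v) v)
    (hlc : ConcaveOn ℝ (Set.Icc 0 1) (fun v => Real.log (f v)))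
    (W : ℝ → ℝ)
    (hW : ∀ c, W c = u 0 * F (c / 2) + u c * (F c - F (c / 2)) +
      (∫ v in c..1, u v * f v) + u 1 * (1 - F 1)) :
    QuasiconcaveOn ℝ (Set.Icc 0 1) W ∧
      ((0 < γ ∨ StrictConcaveOn ℝ (Set.Icc 0 1) (fun v => Real.log (f v))) →
        ∀ c₁ ∈ Set.Icc (0:ℝ) 1, ∀ c₂ ∈ Set.Icc (0:ℝ) 1, c₁ ≠ c₂ →
          ∀ t ∈ Set.Ioo (0:ℝ) 1,
            min (W c₁) (W c₂) < W (t * c₁ + (1 - t) * c₂)) := by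
  have hfc : ContinuousOn f (Icc 0 1) := fun v hv => (hfC1 v hv).continuousAt.continuousWithinAt
  have hg : ContinuousOn (dG γ f) (Icc 0 1) := continuousOn_dG hfC1 hfC1'
  have hW' : ∀ c ∈ interior (Icc (0:ℝ) 1), HasDerivAt W (halfMoment (dG γ f) c) c := by
    intro c hc
    rw [interior_Icc] at hc
    rw [halfMoment_dG hF hfC1 hfC1' hc.1.le hc.2.le]
    exact hasDerivAt_welfare_s10 hu hF hfc hW hc
  have hWc : ContinuousOn W (Icc 0 1) := continuousOn_welfare hu hF hfc hW
  refine ⟨quasiconcaveOn_of_deriv_nonpos_propagates (convex_Icc 0 1) hWc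
    (fun c hc => (hW' c hc).differentiableAt.differentiableWithinAt) ?_,
    fun hstrict => forall_min_lt_of_deriv_neg_propagates (convex_Icc 0 1) hWc ?_⟩
  all_goals
    intro a ha b hb hab
    rw [(hW' a ha).deriv, (hW' b hb).deriv]
    rw [interior_Icc] at ha hb
  · exact halfMoment_nonpos_of_lt hg (fun x hx y hy => dG_nonneg_of_le hγ hfpos hfC1 hlc hx hy)
      ha.1 hab hb.2.le
  · exact halfMoment_neg_of_lt hg (fun x hx y hy => dG_pos_of_lt hγ hfpos hfC1 hlc hstrict hx hy)
      ha.1 hab hb.2.le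
end

section
/- Let G : [0,1] → ℝ be continuous and quasiconvex, and let c ∈ (0,1] satisfy G(c/2) = (2/c)∫_{c/2}^{c} G(v) dv. Then G(c/2) ≤ G(c). -/
open intervalIntegral

/-- If `G` is continuous and quasiconvex on `[0,1]` and the value
`G(c/2)` equals the average of `G` on `[c/2, c]`, then `G(c/2) ≤ G(c)`. -/
theorem stmt_11 (G : ℝ → ℝ)
    (hcont : ContinuousOn G (Set.Icc 0 1))
    (hqc : QuasiconvexOn ℝ (Set.Icc 0 1) G)
    (c : ℝ) (hc : c ∈ Set.Ioc (0:ℝ) 1)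
    (havg : G (c / 2) = (2 / c) * ∫ v in (c / 2)..c, G v) :
    G (c / 2) ≤ G c := by
  by_contra h
  push_neg at h
  obtain ⟨hc0, hc1⟩ := hc
  have hab : c / 2 < c := by linarith
  have hmem1 : c / 2 ∈ Set.Icc (0:ℝ) 1 := ⟨by linarith, by linarith⟩
  have hmem2 : c ∈ Set.Icc (0:ℝ) 1 := ⟨by linarith, hc1⟩
  have hsub : Set.Icc (c/2) c ⊆ Set.Icc (0:ℝ) 1 :=
    Set.Icc_subset_Icc hmem1.1 hmem2.2
  -- sublevel set
  have hconv := hqc (G (c/2))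
  have hoc := hconv.ordConnected
  have hseg : Set.Icc (c/2) c ⊆ {x ∈ Set.Icc (0:ℝ) 1 | G x ≤ G (c/2)} :=
    hoc.out ⟨hmem1, le_refl _⟩ ⟨hmem2, h.le⟩
  have hle : ∀ x ∈ Set.Ioc (c/2) c, G x ≤ G (c/2) := fun x hx =>
    (hseg (Set.Ioc_subset_Icc_self hx)).2
  have hGc : ContinuousOn G (Set.Icc (c/2) c) := hcont.mono hsub
  have hlt : (∫ v in (c/2)..c, G v) < ∫ v in (c/2)..c, G (c/2) := by
    apply integral_lt_integral_of_continuousOn_of_le_of_exists_lt hab hGc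
      continuousOn_const hle
    exact ⟨c, Set.right_mem_Icc.2 hab.le, h⟩
  rw [intervalIntegral.integral_const, smul_eq_mul] at hlt
  have h2c : (0:ℝ) < 2 / c := by positivity
  have := (mul_lt_mul_iff_right₀ h2c).2 hlt
  rw [← havg] at this
  have : G (c/2) < G (c/2) := by
    calc G (c/2) < 2/c * ((c - c/2) * G (c/2)) := this
    _ = G (c/2) := by field_simp; ring
  exact lt_irrefl _ this
end

section
/- Fix 0 ≤ c_L < c_H ≤ 1 and define w(c,v): Proposer's payoff from interval delegation [c,1] at type v, i.e. w(c,v) = u(0) if v < c/2; u(c) if c/2 ≤ v < c; u(v) if c ≤ v < 1; u(1) if v ≥ 1, where u is strictly increasing on [0,1] with maximum at 1. Then v ↦ w(c_H, v) − w(c_L, v) is upcrossing: once strictly positive it stays nonnegative for larger v. -/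
/-- The difference of Proposer payoffs from interval delegation
sets `[c_H,1]` and `[c_L,1]`, as a function of Vetoer's type, is upcrossing. -/
theorem stmt_13 (u : ℝ → ℝ)
    (hu : ConcaveOn ℝ Set.univ u)
    (humax : ∀ a : ℝ, u a ≤ u 1)
    (hustrict : StrictMonoOn u (Set.Icc 0 1))
    (cL cH : ℝ) (h0 : 0 ≤ cL) (hLH : cL < cH) (h1 : cH ≤ 1)
    (w : ℝ → ℝ → ℝ)
    (hw : ∀ c v : ℝ, w c v =
      if v < c / 2 then u 0
      else if v < c then u c
      else if v < 1 then u v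
      else u 1) :
    ∀ v₁ v₂ : ℝ, v₁ < v₂ → 0 < w cH v₁ - w cL v₁ → 0 ≤ w cH v₂ - w cL v₂ := by
  intro v₁ v₂ hv hpos
  have hmono : MonotoneOn u (Set.Icc 0 1) := hustrict.monotoneOn
  have hcL1 : cL ≤ 1 := hLH.le.trans h1
  have hcH0 : 0 ≤ cH := h0.trans hLH.le
  have h1v : cH / 2 ≤ v₁ := by
    by_contra hlt
    push_neg at hlt
    have hL : u 0 ≤ w cL v₁ := by
      rw [hw]
      split_ifs with h1' h2' h3'
      · exact le_rfl
      · exact hmono ⟨le_rfl, zero_le_one⟩ ⟨h0, hcL1⟩ h0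
      · exact hmono ⟨le_rfl, zero_le_one⟩ ⟨h0.trans (not_lt.mp h2'), h3'.le⟩
          (h0.trans (not_lt.mp h2'))
      · exact humax 0
    have hH : w cH v₁ = u 0 := by rw [hw, if_pos hlt]
    linarith
  have h2v : cH / 2 ≤ v₂ := h1v.trans hv.le
  rw [hw, hw]
  have hnot : ¬ v₂ < cH / 2 := not_lt.mpr h2v
  have hnotL : ¬ v₂ < cL / 2 := by push_neg; linarith
  rw [if_neg hnot, if_neg hnotL]
  split_ifs with hA hB hC
  · have := hmono ⟨h0, hcL1⟩ ⟨hcH0, h1⟩ hLH.le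
    linarith
  · push_neg at hB
    have : u v₂ ≤ u cH := hmono ⟨h0.trans hB, by linarith⟩ ⟨hcH0, h1⟩ hA.le
    linarith
  all_goals linarith
end

section
/- Let densities f and g on [0,1] satisfy strict likelihood-ratio dominance of f over g: for all 0 ≤ v_L < v_H ≤ 1, f(v_L)g(v_H) < f(v_H)g(v_L). Let φ : [0,1] → ℝ be bounded, measurable, and upcrossing (there exists v* such that φ ≤ 0 on [0,v*) and φ ≥ 0 on (v*,1]). If ∫_0^1 φ(v) g(v) dv ≥ 0 then ∫_0^1 φ(v) f(v) dv ≥ 0; moreover if ∫_0^1 φ g > 0 and φ is not a.e. zero then ∫_0^1 φ f > 0. -/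
/-!
With `c = f vs / g vs` at the crossing point `vs` of `φ`, strict likelihood-ratio dominance says
that `f < c g` to the left of `vs` and `f > c g` to the right of it, exactly where `φ ≤ 0` and
`φ ≥ 0` respectively. Hence `φ (f - c g) ≥ 0` pointwise, so `∫ φ f ≥ c ∫ φ g` with `c > 0`.
-/

open MeasureTheory intervalIntegral Set

def StrictLRDominates (f g : ℝ → ℝ) (s : Set ℝ) : Prop :=
  ∀ x ∈ s, ∀ y ∈ s, x < y → f x * g y < f y * g x

def UpcrossesAt (φ : ℝ → ℝ) (a b vs : ℝ) : Prop :=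
  (∀ v ∈ Ico a vs, φ v ≤ 0) ∧ ∀ v ∈ Ioc vs b, 0 ≤ φ v

theorem IntervalIntegrable.bdd_mul {f g : ℝ → ℝ} {μ : Measure ℝ} {a b C : ℝ}
    (hg : IntervalIntegrable g μ a b) (hf : AEStronglyMeasurable f μ) (hC : ∀ x, ‖f x‖ ≤ C) :
    IntervalIntegrable (fun x => f x * g x) μ a b :=
  ⟨hg.1.bdd_mul hf.restrict (ae_of_all _ hC), hg.2.bdd_mul hf.restrict (ae_of_all _ hC)⟩

namespace StrictLRDominates

variable {f g φ : ℝ → ℝ} {a b vs : ℝ}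

theorem upcrossing_mul_sub_nonneg (hfg : StrictLRDominates f g (Icc a b))
    (hφ : UpcrossesAt φ a b vs) (hvs : vs ∈ Icc a b) (hg : 0 < g vs) :
    ∀ v ∈ Icc a b, 0 ≤ φ v * (f v - f vs / g vs * g v) := by
  intro v hv
  rw [div_mul_eq_mul_div]
  rcases lt_trichotomy v vs with hlt | rfl | hgt
  · have hratio : f v < f vs * g v / g vs := (lt_div_iff₀ hg).2 (hfg v hv vs hvs hlt)
    exact mul_nonneg_of_nonpos_of_nonpos (hφ.1 v ⟨hv.1, hlt⟩) (by linarith)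
  · simp [mul_div_cancel_right₀ _ hg.ne']
  · have hratio : f vs * g v / g vs < f v := (div_lt_iff₀ hg).2 (hfg vs hvs v hv hgt)
    exact mul_nonneg (hφ.2 v ⟨hgt, hv.2⟩) (by linarith)

theorem ratio_mul_integral_le (hfg : StrictLRDominates f g (Icc a b))
    (hφ : UpcrossesAt φ a b vs) (hvs : vs ∈ Icc a b) (hg : 0 < g vs)
    (hφf : IntervalIntegrable (fun v => φ v * f v) volume a b)
    (hφg : IntervalIntegrable (fun v => φ v * g v) volume a b) :
    f vs / g vs * ∫ v in a..b, φ v * g v ≤ ∫ v in a..b, φ v * f v := by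
  rw [← intervalIntegral.integral_const_mul]
  refine integral_mono_on (hvs.1.trans hvs.2) (hφg.const_mul _) hφf fun v hv => ?_
  have key := hfg.upcrossing_mul_sub_nonneg hφ hvs hg v hv
  linarith [mul_sub (φ v) (f v) (f vs / g vs * g v)]

end StrictLRDominates

/-- Variation-diminishing property: strict likelihood-ratio
dominance of `f` over `g` preserves the nonnegativity (and positivity) of
integrals of bounded measurable upcrossing functions. -/
theorem stmt_14 (f g : ℝ → ℝ)
    (hfpos : ∀ v ∈ Set.Icc (0:ℝ) 1, 0 < f v)
    (hgpos : ∀ v ∈ Set.Icc (0:ℝ) 1, 0 < g v)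
    (hfint : IntervalIntegrable f MeasureTheory.volume 0 1)
    (hgint : IntervalIntegrable g MeasureTheory.volume 0 1)
    (hLR : ∀ vL ∈ Set.Icc (0:ℝ) 1, ∀ vH ∈ Set.Icc (0:ℝ) 1, vL < vH →
      f vL * g vH < f vH * g vL)
    (φ : ℝ → ℝ) (hφm : Measurable φ) (hφb : ∃ C : ℝ, ∀ v, |φ v| ≤ C)
    (hup : ∃ vs ∈ Set.Icc (0:ℝ) 1,
      (∀ v ∈ Set.Ico (0:ℝ) vs, φ v ≤ 0) ∧ (∀ v ∈ Set.Ioc vs 1, 0 ≤ φ v)) :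
    ((0 ≤ ∫ v in (0:ℝ)..1, φ v * g v) → 0 ≤ ∫ v in (0:ℝ)..1, φ v * f v) ∧
      ((0 < ∫ v in (0:ℝ)..1, φ v * g v) →
        ¬ (∀ᵐ v ∂(MeasureTheory.volume.restrict (Set.Icc (0:ℝ) 1)), φ v = 0) →
        0 < ∫ v in (0:ℝ)..1, φ v * f v) := by
  obtain ⟨vs, hvs, hneg, hpos⟩ := hup
  obtain ⟨C, hC⟩ := hφb
  have hc : 0 < f vs / g vs := div_pos (hfpos vs hvs) (hgpos vs hvs)
  have hle := StrictLRDominates.ratio_mul_integral_le hLR ⟨hneg, hpos⟩ hvs (hgpos vs hvs)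
    (hfint.bdd_mul hφm.aestronglyMeasurable hC) (hgint.bdd_mul hφm.aestronglyMeasurable hC)
  exact ⟨fun h => (mul_nonneg hc.le h).trans hle, fun h _ => (mul_pos hc h).trans_le hle⟩
end

section
/- Let f be a strictly positive continuous density on [0,1] that is single-peaked (increasing then decreasing) with interior mode, and define Δ(x) := (F(2x) − F(x))/x − f(x) for x ∈ (0, 1/2]. If Δ has a zero x* := max{x > 0 : Δ(x) = 0} with Δ ≥ 0 on (0, x*) and Δ ≤ 0 on (x*, 1/2], then c* := 2x* satisfies x* ≤ Mo ≤ c*, where Mo is the mode of f; in particular f is decreasing on [c*, 1] whenever c* ≥ Mo. -/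
/-!
`Δ(x*) = 0` says that the mean of `f` over `[x*, 2x*]` equals `f x*`, its value at the left
endpoint. If the whole interval lay in the region where `f` strictly decreases (`Mo < x*`), the
mean would be strictly smaller than `f x*`; if it lay where `f` strictly increases (`2x* < Mo`),
strictly larger. Hence `x* ≤ Mo ≤ 2x*`.
-/

open Set intervalIntegral

theorem integral_lt_sub_mul_of_strictAntiOn {f : ℝ → ℝ} {a b : ℝ} (hab : a < b)
    (hf : StrictAntiOn f (Icc a b)) (hfc : ContinuousOn f (Icc a b)) :
    ∫ x in a..b, f x < (b - a) * f a := by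
  have hlt : ∀ x ∈ Ioc a b, f x < f a := fun x hx =>
    hf ⟨le_rfl, hab.le⟩ (Ioc_subset_Icc_self hx) hx.1
  calc ∫ x in a..b, f x < ∫ _ in a..b, f a :=
        integral_lt_integral_of_continuousOn_of_le_of_exists_lt hab hfc continuousOn_const
          (fun x hx => (hlt x hx).le) ⟨b, right_mem_Icc.2 hab.le, hlt b (right_mem_Ioc.2 hab)⟩
    _ = (b - a) * f a := by rw [integral_const, smul_eq_mul]

theorem sub_mul_lt_integral_of_strictMonoOn {f : ℝ → ℝ} {a b : ℝ} (hab : a < b)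
    (hf : StrictMonoOn f (Icc a b)) (hfc : ContinuousOn f (Icc a b)) :
    (b - a) * f a < ∫ x in a..b, f x := by
  simpa only [integral_neg, mul_neg, neg_lt_neg_iff] using
    integral_lt_sub_mul_of_strictAntiOn hab hf.neg hfc.neg

theorem stmt_16_general (F f : ℝ → ℝ)
    (hfcont : ContinuousOn f (Set.Icc 0 1))
    (Mo : ℝ)
    (hinc : StrictMonoOn f (Set.Icc 0 Mo))
    (hdec : StrictAntiOn f (Set.Icc Mo 1))
    (hF : ∀ v ∈ Set.Icc (0:ℝ) 1, HasDerivAt F (f v) v)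
    (Δ : ℝ → ℝ)
    (hΔ : ∀ x, Δ x = (F (2 * x) - F x) / x - f x)
    (xstar : ℝ) (hx : xstar ∈ Set.Ioc (0:ℝ) (1/2))
    (hzero : Δ xstar = 0) :
    xstar ≤ Mo ∧ Mo ≤ 2 * xstar ∧
      (Mo ≤ 2 * xstar → AntitoneOn f (Set.Icc (2 * xstar) 1)) := by
  obtain ⟨hx0, hx12⟩ := hx
  have hlt : xstar < 2 * xstar := by linarith
  have hsub : Icc xstar (2 * xstar) ⊆ Icc 0 1 := Icc_subset_Icc hx0.le (by linarith)
  have hcont := hfcont.mono hsub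
  have hmean : ∫ t in xstar..2 * xstar, f t = (2 * xstar - xstar) * f xstar := by
    rw [integral_eq_sub_of_hasDerivAt
      (fun t ht => hF t (hsub (by rwa [uIcc_of_le hlt.le] at ht)))
      (hcont.intervalIntegrable_of_Icc hlt.le)]
    have hquot := hΔ xstar
    rw [hzero] at hquot
    field_simp at hquot
    linarith
  have hle : xstar ≤ Mo := by
    by_contra! h
    exact (integral_lt_sub_mul_of_strictAntiOn hlt
      (hdec.mono (Icc_subset_Icc h.le (by linarith))) hcont).ne hmean
  have hge : Mo ≤ 2 * xstar := by
    by_contra! h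
    exact (sub_mul_lt_integral_of_strictMonoOn hlt
      (hinc.mono (Icc_subset_Icc hx0.le h.le)) hcont).ne' hmean
  exact ⟨hle, hge, fun h => hdec.antitoneOn.mono (Icc_subset_Icc h le_rfl)⟩

/-- For a single-peaked density with (unique) interior mode `Mo`,
the zero `x*` of `Δ(x) = (F(2x) − F(x))/x − f(x)` (with `Δ ≥ 0` before and
`Δ ≤ 0` after) satisfies `x* ≤ Mo ≤ c* := 2x*`; in particular `f` is decreasing
on `[c*, 1]` whenever `c* ≥ Mo`. -/
theorem stmt_16 (F f : ℝ → ℝ)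
    (hfcont : ContinuousOn f (Set.Icc 0 1))
    (hfpos : ∀ v ∈ Set.Icc (0:ℝ) 1, 0 < f v)
    (Mo : ℝ) (hMo : Mo ∈ Set.Ioo (0:ℝ) 1)
    (hinc : StrictMonoOn f (Set.Icc 0 Mo))
    (hdec : StrictAntiOn f (Set.Icc Mo 1))
    (hF : ∀ v ∈ Set.Icc (0:ℝ) 1, HasDerivAt F (f v) v)
    (Δ : ℝ → ℝ)
    (hΔ : ∀ x, Δ x = (F (2 * x) - F x) / x - f x)
    (xstar : ℝ) (hx : xstar ∈ Set.Ioc (0:ℝ) (1/2))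
    (hzero : Δ xstar = 0)
    (hmax : ∀ x ∈ Set.Ioc (0:ℝ) (1/2), Δ x = 0 → x ≤ xstar)
    (hpos : ∀ x ∈ Set.Ioo (0:ℝ) xstar, 0 ≤ Δ x)
    (hneg : ∀ x ∈ Set.Ioc xstar (1/2 : ℝ), Δ x ≤ 0) :
    xstar ≤ Mo ∧ Mo ≤ 2 * xstar ∧
      (Mo ≤ 2 * xstar → AntitoneOn f (Set.Icc (2 * xstar) 1)) :=
  stmt_16_general F f hfcont Mo hinc hdec hF Δ hΔ xstar hx hzero
end
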